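/- arXiv:math/0604382 — 7 statements merged into one kernel-verified Lean document; each statement's English description precedes it below -/
import Mathlib

section
/- Let H ∈ S^{2,0} ⊗ W be given by coefficients H^α_{ij} = H^α_{ji} (1 ≤ i,j ≤ n, 1 ≤ α ≤ m) and suppose the Gauss tensor γ(H,H) = Σ_α H^α_{ij} conj(H^α_{kl}) z^i z^j conj(z^k) conj(z^l) equals (Σ_k z^k conj(z^k)) · h(z, conj(z)) for some Hermitian form h of type (1,1). Then the set of asymptotic vectors {v ∈ C^n : H(v,v) = 0}, where H(v,v)^α = Σ_{i,j} H^α_{ij} v^i v^j, is a complex linear subspace of C^n. -/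
open Finset

private lemma key_poly (a b d e f k C : ℂ) (ha : a ≠ 0) (hd : d ≠ 0)
    (E : ∀ s : ℝ, (a + b * s + d * s ^ 2) * (e + f * s + k * s ^ 2) = 4 * (s : ℂ) ^ 2 * C) :
    C = 0 := by
  have E0 := E 0
  have E1 := E 1
  have E2 := E (-1)
  have E3 := E 2
  have E4 := E (-2)
  push_cast at E0 E1 E2 E3 E4
  have he : e = 0 := by
    have h0 : a * e = 0 := by linear_combination E0
    exact (mul_eq_zero.mp h0).resolve_left ha
  have hf : f = 0 := by
    have h1 : a * f = 0 := by
      linear_combination (2/3 : ℂ) * E1 - (2/3 : ℂ) * E2 - (1/12 : ℂ) * E3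
        + (1/12 : ℂ) * E4 - b * he
    exact (mul_eq_zero.mp h1).resolve_left ha
  have hk : k = 0 := by
    have h4 : d * k = 0 := by
      linear_combination (1/24 : ℂ) * E3 + (1/24 : ℂ) * E4 - (1/6 : ℂ) * E1
        - (1/6 : ℂ) * E2 + (1/4 : ℂ) * E0
    exact (mul_eq_zero.mp h4).resolve_left hd
  rw [he, hf, hk] at E1
  linear_combination (-1/4 : ℂ) * E1

private lemma sum_conj_ne_zero {n : ℕ} {v : Fin n → ℂ} (hv : v ≠ 0) :
    (∑ k, v k * (starRingEnd ℂ) (v k)) ≠ 0 := by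
  have hcast : (∑ k, v k * (starRingEnd ℂ) (v k))
      = ((∑ k, Complex.normSq (v k) : ℝ) : ℂ) := by
    push_cast
    exact Finset.sum_congr rfl fun k _ => Complex.mul_conj (v k)
  rw [hcast]
  have hpos : 0 < ∑ k, Complex.normSq (v k) := by
    obtain ⟨k, hk⟩ := Function.ne_iff.mp hv
    exact Finset.sum_pos' (fun i _ => Complex.normSq_nonneg _)
      ⟨k, Finset.mem_univ k, Complex.normSq_pos.mpr hk⟩
  exact_mod_cast ne_of_gt hpos

/-- Iwatani: if the Gauss tensor `γ(H,H)` of a symmetric `W`-valued form `H` is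
Bochner-flat, i.e. `γ(H,H)(z,z,z̄,z̄) = |z|² · h(z,z̄)` for a `(1,1)`-form `h`, then the
set of asymptotic vectors `{v : H(v,v) = 0}` is a complex linear subspace of `ℂⁿ`. -/
theorem asymptotic_vectors_subspace (n m : ℕ) (H : Fin m → Fin n → Fin n → ℂ)
    (hsym : ∀ α i j, H α i j = H α j i)
    (hflat : ∃ h : Fin n → Fin n → ℂ, ∀ z : Fin n → ℂ,
      ∑ α, (∑ i, ∑ j, H α i j * z i * z j)
          * (starRingEnd ℂ) (∑ k, ∑ l, H α k l * z k * z l)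
        = (∑ k, z k * (starRingEnd ℂ) (z k))
          * (∑ i, ∑ j, h i j * z i * (starRingEnd ℂ) (z j))) :
    ∃ S : Submodule ℂ (Fin n → ℂ),
      (S : Set (Fin n → ℂ)) = {v | ∀ α, ∑ i, ∑ j, H α i j * v i * v j = 0} := by
  obtain ⟨h, hflat⟩ := hflat
  refine ⟨{ carrier := {v | ∀ α, ∑ i, ∑ j, H α i j * v i * v j = 0}
            zero_mem' := by intro α; simp
            smul_mem' := ?smul
            add_mem' := ?add }, rfl⟩
  case smul =>
    intro c v hv α
    have expand : ∑ i, ∑ j, H α i j * (c • v) i * (c • v) j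
        = c ^ 2 * ∑ i, ∑ j, H α i j * v i * v j := by
      rw [Finset.mul_sum]
      refine Finset.sum_congr rfl fun i _ => ?_
      rw [Finset.mul_sum]
      refine Finset.sum_congr rfl fun j _ => ?_
      simp only [Pi.smul_apply, smul_eq_mul]
      ring
    rw [expand, hv α, mul_zero]
  case add =>
    intro v w hv hw
    by_cases hv0 : v = 0
    · intro α
      subst hv0
      simpa using hw α
    by_cases hw0 : w = 0
    · intro α
      subst hw0
      simpa using hv α
    -- notation
    set B : Fin m → ℂ := fun α => ∑ i, ∑ j, H α i j * v i * w j with hB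
    have hQ : ∀ (s : ℂ) (α : Fin m),
        (∑ i, ∑ j, H α i j * (v + s • w) i * (v + s • w) j) = 2 * s * B α := by
      intro s α
      have swap : (∑ i, ∑ j, H α i j * w i * v j) = ∑ i, ∑ j, H α i j * v i * w j := by
        rw [Finset.sum_comm]
        refine Finset.sum_congr rfl fun i _ => Finset.sum_congr rfl fun j _ => ?_
        rw [hsym α j i]; ring
      calc ∑ i, ∑ j, H α i j * (v + s • w) i * (v + s • w) j
          = ∑ i, ∑ j, (H α i j * v i * v j + s * (H α i j * v i * w j)
              + s * (H α i j * w i * v j) + s ^ 2 * (H α i j * w i * w j)) := by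
            refine Finset.sum_congr rfl fun i _ => Finset.sum_congr rfl fun j _ => ?_
            simp only [Pi.add_apply, Pi.smul_apply, smul_eq_mul]
            ring
        _ = (∑ i, ∑ j, H α i j * v i * v j) + s * (∑ i, ∑ j, H α i j * v i * w j)
              + s * (∑ i, ∑ j, H α i j * w i * v j)
              + s ^ 2 * (∑ i, ∑ j, H α i j * w i * w j) := by
            simp only [Finset.sum_add_distrib, Finset.mul_sum]
        _ = 2 * s * B α := by
            rw [hv α, hw α, swap, hB]; ring
    set a : ℂ := ∑ k, v k * (starRingEnd ℂ) (v k) with ha'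
    set d : ℂ := ∑ k, w k * (starRingEnd ℂ) (w k) with hd'
    set b : ℂ := ∑ k, (v k * (starRingEnd ℂ) (w k) + w k * (starRingEnd ℂ) (v k)) with hb'
    set e : ℂ := ∑ i, ∑ j, h i j * v i * (starRingEnd ℂ) (v j) with he'
    set f : ℂ := ∑ i, ∑ j, (h i j * v i * (starRingEnd ℂ) (w j)
      + h i j * w i * (starRingEnd ℂ) (v j)) with hf'
    set k : ℂ := ∑ i, ∑ j, h i j * w i * (starRingEnd ℂ) (w j) with hk'
    set C : ℂ := ∑ α, B α * (starRingEnd ℂ) (B α) with hC'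
    have hNorm : ∀ s : ℝ,
        (∑ x, (v + (s : ℂ) • w) x * (starRingEnd ℂ) ((v + (s : ℂ) • w) x))
          = a + b * s + d * s ^ 2 := by
      intro s
      rw [ha', hb', hd', Finset.sum_mul, Finset.sum_mul, ← Finset.sum_add_distrib,
        ← Finset.sum_add_distrib]
      refine Finset.sum_congr rfl fun x _ => ?_
      simp only [Pi.add_apply, Pi.smul_apply, smul_eq_mul, map_add, map_mul,
        Complex.conj_ofReal]
      ring
    have hH : ∀ s : ℝ,
        (∑ i, ∑ j, h i j * (v + (s : ℂ) • w) i * (starRingEnd ℂ) ((v + (s : ℂ) • w) j))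
          = e + f * s + k * s ^ 2 := by
      intro s
      rw [he', hf', hk', Finset.sum_mul, Finset.sum_mul, ← Finset.sum_add_distrib,
        ← Finset.sum_add_distrib]
      refine Finset.sum_congr rfl fun i _ => ?_
      rw [Finset.sum_mul, Finset.sum_mul, ← Finset.sum_add_distrib, ← Finset.sum_add_distrib]
      refine Finset.sum_congr rfl fun j _ => ?_
      simp only [Pi.add_apply, Pi.smul_apply, smul_eq_mul, map_add, map_mul,
        Complex.conj_ofReal]
      ring
    have Ekey : ∀ s : ℝ,
        (a + b * s + d * s ^ 2) * (e + f * s + k * s ^ 2) = 4 * (s : ℂ) ^ 2 * C := by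
      intro s
      have hfz := hflat (v + (s : ℂ) • w)
      rw [hNorm s, hH s] at hfz
      have L : (∑ α, (∑ i, ∑ j, H α i j * (v + (s : ℂ) • w) i * (v + (s : ℂ) • w) j)
          * (starRingEnd ℂ) (∑ x, ∑ l, H α x l * (v + (s : ℂ) • w) x * (v + (s : ℂ) • w) l))
          = 4 * (s : ℂ) ^ 2 * C := by
        rw [hC', Finset.mul_sum]
        refine Finset.sum_congr rfl fun α _ => ?_
        rw [hQ (s : ℂ) α]
        simp only [map_mul, Complex.conj_ofReal]
        have h2 : (starRingEnd ℂ) 2 = 2 := by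
          rw [Complex.conj_eq_iff_im]; rfl
        rw [h2]; ring
      rw [L] at hfz
      exact hfz.symm
    have hC0 : C = 0 := key_poly a b d e f k C (sum_conj_ne_zero hv0) (sum_conj_ne_zero hw0) Ekey
    have hBzero : ∀ α, B α = 0 := by
      have hcast : C = ((∑ α, Complex.normSq (B α) : ℝ) : ℂ) := by
        rw [hC']; push_cast
        exact Finset.sum_congr rfl fun α _ => Complex.mul_conj (B α)
      rw [hcast] at hC0
      have hsum : (∑ α, Complex.normSq (B α)) = 0 := by exact_mod_cast hC0
      intro α
      have := (Finset.sum_eq_zero_iff_of_nonneg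
        (fun i _ => Complex.normSq_nonneg (B i))).mp hsum α (Finset.mem_univ α)
      exact Complex.normSq_eq_zero.mp this
    intro α
    have h1 : v + w = v + (1 : ℂ) • w := by rw [one_smul]
    rw [h1, hQ 1 α, hBzero α, mul_zero]
end

section
/- Under the hypotheses of Iwatani's theorem (H ∈ S^{2,0}⊗W with Bochner-flat γ(H,H)), if the asymptotic subspace {v : H(v,v)=0} has complex codimension k in C^n, then m ≥ (1/2) k (2n − k + 1). -/
/-!
Polarizing `‖H(z,z)‖² = |z|² h(z,z)` gives the Gram identity
`⟪H(x,y) + H(y,x), H(u,v) + H(v,u)⟫ = ⟪x,u⟫ h(y,v) + ⟪x,v⟫ h(y,u) + ⟪y,u⟫ h(x,v) + ⟪y,v⟫ h(x,u)`.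
In particular `h` is Hermitian; in an orthonormal eigenbasis `w` its eigenvalues are
`λ_a = ‖H(w_a,w_a)‖² ≥ 0`, and the vectors `H(w_a,w_b) + H(w_b,w_a)`, indexed by unordered pairs
`{a,b}`, are pairwise orthogonal and nonzero as soon as `λ_a + λ_b > 0`. Hence
`m ≥ n(n+1)/2 - c(c+1)/2`, where `c = #{a | λ_a = 0} ≤ n - k` because the `w_a` with `λ_a = 0`
are asymptotic.
-/

open scoped InnerProductSpace ComplexConjugate
open Module Finset

namespace Iwatani

variable {V W : Type*} [NormedAddCommGroup V] [InnerProductSpace ℂ V]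
  [NormedAddCommGroup W] [InnerProductSpace ℂ W]

/-- `⟪z, T z⟫` plays the role of the `(1,1)`-form `h` in `γ(B,B)(z,z,z̄,z̄) = |z|² h(z,z̄)`. -/
def IsBochnerFlat (B : V →ₗ[ℂ] V →ₗ[ℂ] W) (T : V →ₗ[ℂ] V) : Prop :=
  ∀ z, ⟪B z z, B z z⟫_ℂ = ⟪z, z⟫_ℂ * ⟪z, T z⟫_ℂ

def symmProd {ι : Type*} (B : V →ₗ[ℂ] V →ₗ[ℂ] W) (w : ι → V) : Sym2 ι → W :=
  Sym2.lift ⟨fun a b => B (w a) (w b) + B (w b) (w a), fun _ _ => add_comm _ _⟩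

@[simp]
theorem symmProd_mk {ι : Type*} (B : V →ₗ[ℂ] V →ₗ[ℂ] W) (w : ι → V) (a b : ι) :
    symmProd B w s(a, b) = B (w a) (w b) + B (w b) (w a) :=
  rfl

namespace IsBochnerFlat

variable {B : V →ₗ[ℂ] V →ₗ[ℂ] W} {T : V →ₗ[ℂ] V}

/-- Summing the flatness identity at `x + t y` over `t ∈ {±1, ±i}` keeps only the terms of
bidegree `(0,0)`, `(1,1)`, `(2,2)` in `(t, t̄)`. -/
theorem inner_polar_diag (hB : IsBochnerFlat B T) (x y : V) :
    ⟪B x y + B y x, B x y + B y x⟫_ℂ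
      = ⟪x, x⟫_ℂ * ⟪y, T y⟫_ℂ + ⟪x, y⟫_ℂ * ⟪y, T x⟫_ℂ + ⟪y, x⟫_ℂ * ⟪x, T y⟫_ℂ
        + ⟪y, y⟫_ℂ * ⟪x, T x⟫_ℂ := by
  have h₁ := hB (x + y)
  have h₂ := hB (x - y)
  have h₃ := hB (x + Complex.I • y)
  have h₄ := hB (x - Complex.I • y)
  simp only [map_add, map_sub, map_smul, LinearMap.add_apply, LinearMap.sub_apply,
    LinearMap.smul_apply, inner_add_left, inner_add_right, inner_sub_left, inner_sub_right,
    inner_smul_left, inner_smul_right, Complex.conj_I] at h₁ h₂ h₃ h₄ ⊢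
  linear_combination (norm := (ring_nf; simp only [Complex.I_sq, Complex.I_pow_four]; ring_nf))
    (h₁ + h₂ + h₃ + h₄) / 4 - hB x - hB y

/-- At `x + s u` the polarized identity differs from its values at `x` and `u` by
`s a + s̄ b`, whose coefficient `a` is read off from `s = 1` and `s = i`. -/
theorem inner_polar_of_eq (hB : IsBochnerFlat B T) (x y u : V) :
    ⟪B x y + B y x, B u y + B y u⟫_ℂ
      = ⟪x, u⟫_ℂ * ⟪y, T y⟫_ℂ + ⟪x, y⟫_ℂ * ⟪y, T u⟫_ℂ + ⟪y, u⟫_ℂ * ⟪x, T y⟫_ℂ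
        + ⟪y, y⟫_ℂ * ⟪x, T u⟫_ℂ := by
  have h₀ := hB.inner_polar_diag x y
  have h₁ := hB.inner_polar_diag (x + u) y
  have h₂ := hB.inner_polar_diag (x + Complex.I • u) y
  have h₃ := hB.inner_polar_diag u y
  simp only [map_add, map_smul, LinearMap.add_apply, LinearMap.smul_apply, inner_add_left,
    inner_add_right, inner_smul_left, inner_smul_right, Complex.conj_I] at h₀ h₁ h₂ h₃ ⊢
  linear_combination (norm := (ring_nf; simp only [Complex.I_sq, Complex.I_pow_three]; ring_nf))
    (h₁ - Complex.I * h₂) / 2 - (1 - Complex.I) / 2 * (h₀ + h₃)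

theorem inner_polar (hB : IsBochnerFlat B T) (x y u v : V) :
    ⟪B x y + B y x, B u v + B v u⟫_ℂ
      = ⟪x, u⟫_ℂ * ⟪y, T v⟫_ℂ + ⟪x, v⟫_ℂ * ⟪y, T u⟫_ℂ + ⟪y, u⟫_ℂ * ⟪x, T v⟫_ℂ
        + ⟪y, v⟫_ℂ * ⟪x, T u⟫_ℂ := by
  have h₀ := hB.inner_polar_of_eq x y u
  have h₁ := hB.inner_polar_of_eq x (y + v) u
  have h₂ := hB.inner_polar_of_eq x (y + Complex.I • v) u
  have h₃ := hB.inner_polar_of_eq x v u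
  simp only [map_add, map_smul, LinearMap.add_apply, LinearMap.smul_apply, inner_add_left,
    inner_add_right, inner_smul_left, inner_smul_right, Complex.conj_I] at h₀ h₁ h₂ h₃ ⊢
  linear_combination (norm := (ring_nf; simp only [Complex.I_sq, Complex.I_pow_three]; ring_nf))
    (h₁ - Complex.I * h₂) / 2 - (1 - Complex.I) / 2 * (h₀ + h₃)

theorem inner_map_self_eq (hB : IsBochnerFlat B T) (z : V) :
    ⟪z, T z⟫_ℂ = ((‖B z z‖ ^ 2 / ‖z‖ ^ 2 : ℝ) : ℂ) := by
  rcases eq_or_ne z 0 with rfl | hz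
  · simp
  have h := hB z
  rw [inner_self_eq_norm_sq_to_K, inner_self_eq_norm_sq_to_K] at h
  have : (‖z‖ : ℂ) ≠ 0 := by exact_mod_cast norm_ne_zero_iff.mpr hz
  push_cast
  field_simp
  linear_combination -h

theorem isSymmetric (hB : IsBochnerFlat B T) : T.IsSymmetric := by
  refine (LinearMap.isSymmetric_iff_inner_map_self_real T).mpr fun z => ?_
  rw [← inner_conj_symm, Complex.conj_conj, hB.inner_map_self_eq, Complex.conj_ofReal]

theorem eq_norm_sq_of_apply_eq_smul (hB : IsBochnerFlat B T) {v : V} (hv : ‖v‖ = 1) {μ : ℝ}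
    (hTv : T v = (μ : ℂ) • v) : μ = ‖B v v‖ ^ 2 := by
  have h := hB.inner_map_self_eq v
  rw [hTv, inner_smul_right, inner_self_eq_norm_sq_to_K, hv] at h
  exact_mod_cast (by simpa [hv] using h : (μ : ℂ) = ((‖B v v‖ ^ 2 : ℝ) : ℂ))

variable {ι : Type*} {w : ι → V} {μ : ι → ℂ}

theorem inner_symmProd_eq_zero (hB : IsBochnerFlat B T) (hw : Orthonormal ℂ w)
    (hμ : ∀ i, T (w i) = μ i • w i) {e e' : Sym2 ι} (he : e ≠ e') :
    ⟪symmProd B w e, symmProd B w e'⟫_ℂ = 0 := by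
  classical
  induction e using Sym2.ind with | _ a b => ?_
  induction e' using Sym2.ind with | _ c d => ?_
  simp only [ne_eq, Sym2.eq_iff, not_or, not_and] at he
  rw [symmProd_mk, symmProd_mk, hB.inner_polar]
  simp only [hμ, inner_smul_right, orthonormal_iff_ite.mp hw]
  split_ifs <;> simp_all

theorem symmProd_ne_zero (hB : IsBochnerFlat B T) (hw : Orthonormal ℂ w)
    (hμ : ∀ i, T (w i) = μ i • w i) {a b : ι} (hab : μ a + μ b ≠ 0) :
    symmProd B w s(a, b) ≠ 0 := by
  classical
  have h := hB.inner_polar (w a) (w b) (w a) (w b)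
  simp only [hμ, inner_smul_right, orthonormal_iff_ite.mp hw] at h
  intro h0
  rw [← symmProd_mk, h0, inner_zero_left] at h
  rcases eq_or_ne a b with rfl | hne
  · simp only [if_true, one_mul, mul_one] at h
    exact hab (by linear_combination -h / 2)
  · simp only [if_true, hne, hne.symm, if_false, one_mul, mul_one, zero_mul, add_zero] at h
    exact hab (by linear_combination -h)

end IsBochnerFlat

theorem _root_.Orthonormal.card_le_finrank_of_mem {ι : Type*} [Fintype ι] {w : ι → V}
    (hw : Orthonormal ℂ w) {S : Submodule ℂ V} [FiniteDimensional ℂ S] (hS : ∀ i, w i ∈ S) :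
    Fintype.card ι ≤ finrank ℂ S := by
  rw [← finrank_span_eq_card hw.linearIndependent]
  exact Submodule.finrank_mono (Submodule.span_le.mpr (Set.range_subset_iff.mpr hS))

theorem IsBochnerFlat.card_sym2_sdiff_le {ι : Type*} [Fintype ι] [DecidableEq ι]
    [FiniteDimensional ℂ W] {B : V →ₗ[ℂ] V →ₗ[ℂ] W} {T : V →ₗ[ℂ] V} (hB : IsBochnerFlat B T)
    {w : ι → V} (hw : Orthonormal ℂ w) {μ : ι → ℝ} (hμ : ∀ i, T (w i) = (μ i : ℂ) • w i) :
    #(univ.sym2 \ (univ.filter fun i => μ i = 0).sym2) ≤ finrank ℂ W := by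
  rw [← Fintype.card_coe]
  refine (linearIndependent_of_ne_zero_of_inner_eq_zero (v := fun e : ↥(univ.sym2 \ _) =>
    symmProd B w e) ?_ ?_).fintype_card_le_finrank
  · rintro ⟨e, he⟩
    induction e using Sym2.ind with | _ a b => ?_
    refine hB.symmProd_ne_zero hw hμ ?_
    have hnz : ¬(μ a = 0 ∧ μ b = 0) := by simpa using (mem_sdiff.mp he).2
    have ha : 0 ≤ μ a := hB.eq_norm_sq_of_apply_eq_smul (hw.1 a) (hμ a) ▸ sq_nonneg _
    have hb : 0 ≤ μ b := hB.eq_norm_sq_of_apply_eq_smul (hw.1 b) (hμ b) ▸ sq_nonneg _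
    have hpos : 0 < μ a + μ b := by
      by_contra
      exact hnz ⟨by linarith, by linarith⟩
    exact_mod_cast hpos.ne'
  · exact fun e e' he => hB.inner_symmProd_eq_zero hw hμ (Subtype.coe_ne_coe.mpr he)

theorem IsBochnerFlat.finrank_add_one_choose_two_le
    [FiniteDimensional ℂ V] [FiniteDimensional ℂ W] {B : V →ₗ[ℂ] V →ₗ[ℂ] W} {T : V →ₗ[ℂ] V}
    (hB : IsBochnerFlat B T) (S : Submodule ℂ V) (hS : ∀ v, B v v = 0 → v ∈ S) :
    (finrank ℂ V + 1).choose 2 ≤ finrank ℂ W + (finrank ℂ S + 1).choose 2 := by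
  set w := hB.isSymmetric.eigenvectorBasis rfl
  set lam := hB.isSymmetric.eigenvalues rfl
  have hμ : ∀ i, T (w i) = (lam i : ℂ) • w i := hB.isSymmetric.apply_eigenvectorBasis rfl
  set Z := univ.filter fun i => lam i = 0
  have hZ : #Z ≤ finrank ℂ S := by
    rw [← Fintype.card_coe]
    refine (w.orthonormal.comp _ Subtype.val_injective).card_le_finrank_of_mem fun i => hS _ ?_
    have hi := (mem_filter.mp i.2).2
    rw [hB.eq_norm_sq_of_apply_eq_smul (w.orthonormal.1 i) (hμ i)] at hi
    simpa using hi
  have hpairs : #(univ.sym2 \ Z.sym2) ≤ finrank ℂ W := hB.card_sym2_sdiff_le w.orthonormal hμ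
  have hsplit := card_sdiff_add_card_eq_card (sym2_mono (subset_univ Z))
  rw [card_sym2, card_sym2, card_univ, Fintype.card_fin] at hsplit
  have hmono := Nat.choose_le_choose 2 (Nat.add_le_add_right hZ 1)
  omega

def toEuclideanBilin {m n : ℕ} (H : Fin m → Fin n → Fin n → ℂ) :
    EuclideanSpace ℂ (Fin n) →ₗ[ℂ] EuclideanSpace ℂ (Fin n) →ₗ[ℂ] EuclideanSpace ℂ (Fin m) :=
  LinearMap.mk₂ ℂ (fun u v => WithLp.toLp 2 fun α => ∑ i, ∑ j, H α i j * u i * v j)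
    (fun u u' v => by ext α; simp [sum_add_distrib, mul_add, add_mul])
    (fun c u v => by ext α; simp [mul_sum, mul_left_comm, mul_assoc])
    (fun u v v' => by ext α; simp [sum_add_distrib, mul_add])
    (fun c u v => by ext α; simp [mul_sum, mul_left_comm, mul_assoc])

theorem isBochnerFlat_toEuclideanBilin {m n : ℕ} (H : Fin m → Fin n → Fin n → ℂ)
    (h : Fin n → Fin n → ℂ)
    (hflat : ∀ z : Fin n → ℂ,
      ∑ α, (∑ i, ∑ j, H α i j * z i * z j) * conj (∑ k, ∑ l, H α k l * z k * z l)
        = (∑ k, z k * conj (z k)) * (∑ i, ∑ j, h i j * z i * conj (z j))) :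
    IsBochnerFlat (toEuclideanBilin H) (Matrix.of fun j i => h i j).toEuclideanLin := by
  intro z
  have := hflat z.ofLp
  simp only [PiLp.inner_apply, RCLike.inner_apply, Matrix.toLpLin_apply] at *
  refine this.trans (congrArg _ ?_)
  simp only [Matrix.mulVec, dotProduct, Matrix.of_apply, sum_mul]
  exact sum_comm

theorem sub_mul_two_mul_sub_add_one_le {n m s : ℕ} (hs : s ≤ n)
    (h : (n + 1).choose 2 ≤ m + (s + 1).choose 2) : (n - s) * (2 * n - (n - s) + 1) ≤ 2 * m := by
  have hn : (n + 1) * n = (n + 1).choose 2 * 2 := by simpa using Nat.add_one_mul_choose_eq n 1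
  have hs' : (s + 1) * s = (s + 1).choose 2 * 2 := by simpa using Nat.add_one_mul_choose_eq s 1
  obtain ⟨j, rfl⟩ := Nat.exists_eq_add_of_le hs
  rw [Nat.add_sub_cancel_left, show 2 * (s + j) - j = 2 * s + j by omega]
  nlinarith

end Iwatani

theorem iwatani_inequality_general (n m : ℕ) (H : Fin m → Fin n → Fin n → ℂ)
    (hflat : ∃ h : Fin n → Fin n → ℂ, ∀ z : Fin n → ℂ,
      ∑ α, (∑ i, ∑ j, H α i j * z i * z j)
          * (starRingEnd ℂ) (∑ k, ∑ l, H α k l * z k * z l)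
        = (∑ k, z k * (starRingEnd ℂ) (z k))
          * (∑ i, ∑ j, h i j * z i * (starRingEnd ℂ) (z j)))
    (S : Submodule ℂ (Fin n → ℂ))
    (hS : (S : Set (Fin n → ℂ)) = {v | ∀ α, ∑ i, ∑ j, H α i j * v i * v j = 0})
    (k : ℕ) (hk : k = n - Module.finrank ℂ S) :
    2 * m ≥ k * (2 * n - k + 1) := by
  obtain ⟨h, hflat⟩ := hflat
  set e : EuclideanSpace ℂ (Fin n) ≃ₗ[ℂ] (Fin n → ℂ) := WithLp.linearEquiv 2 ℂ (Fin n → ℂ)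
  have hS' (v) (hv : Iwatani.toEuclideanBilin H v v = 0) :
      v ∈ S.map (e.symm : (Fin n → ℂ) →ₗ[ℂ] _) := by
    rw [Submodule.mem_map_equiv, LinearEquiv.symm_symm, ← SetLike.mem_coe, hS]
    exact fun α => congrArg (· α) hv
  have hcount :=
    (Iwatani.isBochnerFlat_toEuclideanBilin H h hflat).finrank_add_one_choose_two_le _ hS'
  rw [finrank_euclideanSpace_fin, finrank_euclideanSpace_fin, LinearEquiv.finrank_map_eq] at hcount
  have hSn : finrank ℂ S ≤ n := (Submodule.finrank_le S).trans_eq (Module.finrank_fin_fun ℂ)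
  exact hk ▸ Iwatani.sub_mul_two_mul_sub_add_one_le hSn hcount

/-- Iwatani's inequality: if `H` is Bochner-flat and the asymptotic subspace
`{v : H(v,v) = 0}` has complex codimension `k` in `ℂⁿ`, then `m ≥ ½ k (2n − k + 1)`
(stated as `2m ≥ k(2n − k + 1)`). -/
theorem iwatani_inequality (n m : ℕ) (H : Fin m → Fin n → Fin n → ℂ)
    (hsym : ∀ α i j, H α i j = H α j i)
    (hflat : ∃ h : Fin n → Fin n → ℂ, ∀ z : Fin n → ℂ,
      ∑ α, (∑ i, ∑ j, H α i j * z i * z j)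
          * (starRingEnd ℂ) (∑ k, ∑ l, H α k l * z k * z l)
        = (∑ k, z k * (starRingEnd ℂ) (z k))
          * (∑ i, ∑ j, h i j * z i * (starRingEnd ℂ) (z j)))
    (S : Submodule ℂ (Fin n → ℂ))
    (hS : (S : Set (Fin n → ℂ)) = {v | ∀ α, ∑ i, ∑ j, H α i j * v i * v j = 0})
    (k : ℕ) (hk : k = n - Module.finrank ℂ S) :
    2 * m ≥ k * (2 * n - k + 1) :=
  iwatani_inequality_general n m H hflat S hS k hk
end

section
/- Let H ∈ S^{2,0} ⊗ W satisfy the Bochner-flat condition. If m < n, then H = 0 (i.e., the rank k of H is 0). -/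
lemma untie_c11 (c00 c01 c02 c10 c11 c12 c20 c21 c22 : ℂ)
    (hyp : ∀ t : ℂ, c00 + c01 * (starRingEnd ℂ) t + c02 * ((starRingEnd ℂ) t)^2
      + c10 * t + c11 * (t * (starRingEnd ℂ) t) + c12 * (t * ((starRingEnd ℂ) t)^2)
      + c20 * t^2 + c21 * (t^2 * (starRingEnd ℂ) t) + c22 * (t^2 * ((starRingEnd ℂ) t)^2) = 0) :
    c11 = 0 := by
  have h1 := hyp 1
  have h2 := hyp 2
  have h3 := hyp 3
  have hm1 := hyp (-1)
  have hm2 := hyp (-2)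
  have hm3 := hyp (-3)
  have hi1 := hyp (Complex.I)
  have hi2 := hyp (2*Complex.I)
  have hi3 := hyp (3*Complex.I)
  have him1 := hyp (-Complex.I)
  have him2 := hyp (-(2*Complex.I))
  have him3 := hyp (-(3*Complex.I))
  simp only [map_one, map_neg, map_mul, map_ofNat, Complex.conj_I] at h1 h2 h3 hm1 hm2 hm3 hi1 hi2 hi3 him1 him2 him3
  linear_combination (-13/96)*(h1 + hm1 + hi1 + him1) + (1/6)*(h2+hm2+hi2+him2) + (-1/32)*(h3+hm3+hi3+him3) + ((c11 - c20 - c02)/2) * Complex.I_mul_I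

lemma star_identity (n m : ℕ) (H : Fin m → Fin n → Fin n → ℂ) (h : Fin n → Fin n → ℂ)
    (hflat : ∀ z : Fin n → ℂ,
      ∑ α, (∑ i, ∑ j, H α i j * z i * z j)
          * (starRingEnd ℂ) (∑ k, ∑ l, H α k l * z k * z l)
        = (∑ k, z k * (starRingEnd ℂ) (z k))
          * (∑ i, ∑ j, h i j * z i * (starRingEnd ℂ) (z j)))
    (a b : Fin n → ℂ) :
    ∑ α, (∑ i, ∑ j, H α i j * (a i * b j + b i * a j))
        * (starRingEnd ℂ) (∑ i, ∑ j, H α i j * (a i * b j + b i * a j))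
      = (∑ k, a k * (starRingEnd ℂ) (a k)) * (∑ i, ∑ j, h i j * b i * (starRingEnd ℂ) (b j))
      + (∑ k, b k * (starRingEnd ℂ) (a k)) * (∑ i, ∑ j, h i j * a i * (starRingEnd ℂ) (b j))
      + (∑ k, a k * (starRingEnd ℂ) (b k)) * (∑ i, ∑ j, h i j * b i * (starRingEnd ℂ) (a j))
      + (∑ k, b k * (starRingEnd ℂ) (b k)) * (∑ i, ∑ j, h i j * a i * (starRingEnd ℂ) (a j)) := by
  set C := starRingEnd ℂ
  -- names for the nine alpha-sums and scalar quantities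
  set Sa : Fin m → ℂ := fun α => ∑ i, ∑ j, H α i j * a i * a j with hSa
  set Sg : Fin m → ℂ := fun α => ∑ i, ∑ j, H α i j * (a i * b j + b i * a j) with hSg
  set Sb : Fin m → ℂ := fun α => ∑ i, ∑ j, H α i j * b i * b j with hSb
  set ipaa : ℂ := ∑ k, a k * C (a k)
  set ipab : ℂ := ∑ k, a k * C (b k)
  set ipba : ℂ := ∑ k, b k * C (a k)
  set ipbb : ℂ := ∑ k, b k * C (b k)
  set haa : ℂ := ∑ i, ∑ j, h i j * a i * C (a j)
  set hab : ℂ := ∑ i, ∑ j, h i j * a i * C (b j)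
  set hba : ℂ := ∑ i, ∑ j, h i j * b i * C (a j)
  set hbb : ℂ := ∑ i, ∑ j, h i j * b i * C (b j)
  have key : (∑ α, Sg α * C (Sg α)) - (ipaa*hbb + ipba*hab + ipab*hba + ipbb*haa) = 0 := by
    apply untie_c11 ((∑ α, Sa α * C (Sa α)) - ipaa*haa)
      ((∑ α, Sa α * C (Sg α)) - (ipaa*hab + ipab*haa))
      ((∑ α, Sa α * C (Sb α)) - ipab*hab)
      ((∑ α, Sg α * C (Sa α)) - (ipba*haa + ipaa*hba))
      _
      ((∑ α, Sg α * C (Sb α)) - (ipab*hbb + ipbb*hab))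
      ((∑ α, Sb α * C (Sa α)) - ipba*hba)
      ((∑ α, Sb α * C (Sg α)) - (ipbb*hba + ipba*hbb))
      ((∑ α, Sb α * C (Sb α)) - ipbb*hbb)
    intro t
    have h0 := hflat (fun i => a i + t * b i)
    simp only at h0
    -- expand the quadratic in t inside each alpha-sum
    have expand1 : ∀ α : Fin m, (∑ i, ∑ j, H α i j * (a i + t * b i) * (a j + t * b j))
        = Sa α + t * Sg α + t^2 * Sb α := by
      intro α
      simp only [hSa, hSg, hSb, Finset.mul_sum]
      rw [← Finset.sum_add_distrib, ← Finset.sum_add_distrib]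
      refine Finset.sum_congr rfl fun i _ => ?_
      rw [← Finset.sum_add_distrib, ← Finset.sum_add_distrib]
      refine Finset.sum_congr rfl fun j _ => ?_
      ring
    have expand2 : (∑ k, (a k + t * b k) * C (a k + t * b k))
        = ipaa + ipba * t + ipab * C t + ipbb * (t * C t) := by
      simp only [map_add, map_mul, ipaa, ipab, ipba, ipbb, Finset.sum_mul]
      rw [← Finset.sum_add_distrib, ← Finset.sum_add_distrib, ← Finset.sum_add_distrib]
      refine Finset.sum_congr rfl fun k _ => ?_
      ring
    have expand3 : (∑ i, ∑ j, h i j * (a i + t * b i) * C (a j + t * b j))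
        = haa + hba * t + hab * C t + hbb * (t * C t) := by
      simp only [map_add, map_mul, haa, hab, hba, hbb, Finset.sum_mul]
      rw [← Finset.sum_add_distrib, ← Finset.sum_add_distrib, ← Finset.sum_add_distrib]
      refine Finset.sum_congr rfl fun i _ => ?_
      rw [← Finset.sum_add_distrib, ← Finset.sum_add_distrib, ← Finset.sum_add_distrib]
      refine Finset.sum_congr rfl fun j _ => ?_
      ring
    rw [expand2, expand3] at h0
    simp only [expand1] at h0
    have expand4 : ∀ α : Fin m, (Sa α + t * Sg α + t^2 * Sb α) * C (Sa α + t * Sg α + t^2 * Sb α)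
        = (Sa α * C (Sa α)) + (Sa α * C (Sg α)) * C t + (Sa α * C (Sb α)) * (C t)^2
          + (Sg α * C (Sa α)) * t + (Sg α * C (Sg α)) * (t * C t) + (Sg α * C (Sb α)) * (t * (C t)^2)
          + (Sb α * C (Sa α)) * t^2 + (Sb α * C (Sg α)) * (t^2 * C t) + (Sb α * C (Sb α)) * (t^2 * (C t)^2) := by
      intro α
      simp only [map_add, map_mul, map_pow]
      ring
    simp only [expand4] at h0
    simp only [Finset.sum_add_distrib, ← Finset.sum_mul] at h0
    linear_combination h0
  linear_combination key

lemma sum_mul_conj {k : ℕ} (x : Fin k → ℂ) :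
    ∑ i, x i * (starRingEnd ℂ) (x i) = ((∑ i, Complex.normSq (x i) : ℝ) : ℂ) := by
  push_cast
  simp only [Complex.mul_conj]

/-- If `H` is Bochner-flat and `m < n`, then `H = 0` (the rank of `H` is `0`). -/
theorem bochner_flat_low_codim_vanishes (n m : ℕ) (hm : m < n)
    (H : Fin m → Fin n → Fin n → ℂ)
    (hsym : ∀ α i j, H α i j = H α j i)
    (hflat : ∃ h : Fin n → Fin n → ℂ, ∀ z : Fin n → ℂ,
      ∑ α, (∑ i, ∑ j, H α i j * z i * z j)
          * (starRingEnd ℂ) (∑ k, ∑ l, H α k l * z k * z l)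
        = (∑ k, z k * (starRingEnd ℂ) (z k))
          * (∑ i, ∑ j, h i j * z i * (starRingEnd ℂ) (z j))) :
    ∀ α i j, H α i j = 0 := by
  obtain ⟨h, hflat⟩ := hflat
  set C := starRingEnd ℂ with hC
  set d : Fin n → Fin n → ℂ := fun i₀ p => if p = i₀ then 1 else 0 with hd
  have conj_d : ∀ i₀ p, C (d i₀ p) = d i₀ p := by
    intro i₀ p
    simp only [hd]
    split <;> simp
  -- collapse lemmas
  have e_ip : ∀ i' j' : Fin n, (∑ k, d i' k * C (d j' k)) = if i' = j' then 1 else 0 := by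
    intro i' j'
    simp only [conj_d]
    simp only [hd, ite_mul, mul_ite, one_mul, mul_one, mul_zero, Finset.sum_ite_eq', Finset.mem_univ, if_true]
    by_cases hh : i' = j' <;> simp [hh, eq_comm]
  have e_h : ∀ i' j' : Fin n, (∑ p, ∑ q, h p q * d i' p * C (d j' q)) = h i' j' := by
    intro i' j'
    simp only [conj_d]
    simp [hd, mul_ite, ite_mul, Finset.sum_ite_irrel, Finset.sum_const_zero,
      Finset.sum_ite_eq', Finset.mem_univ]
  have e_hab : ∀ (i₀ : Fin n) (g : Fin n → ℂ),
      (∑ p, ∑ q, h p q * d i₀ p * C (g q)) = ∑ q, h i₀ q * C (g q) := by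
    intro i₀ g
    simp [hd, mul_ite, ite_mul, Finset.sum_ite_irrel, Finset.sum_const_zero,
      Finset.sum_ite_eq', Finset.mem_univ]
  have e_hba : ∀ (i₀ : Fin n) (g : Fin n → ℂ),
      (∑ p, ∑ q, h p q * g p * C (d i₀ q)) = ∑ p, h p i₀ * g p := by
    intro i₀ g
    simp only [conj_d]
    simp [hd, mul_ite, ite_mul, Finset.sum_ite_irrel, Finset.sum_const_zero,
      Finset.sum_ite_eq', Finset.mem_univ, mul_comm]
  have e_ipb : ∀ (i₀ : Fin n) (g : Fin n → ℂ), (∑ k, g k * C (d i₀ k)) = g i₀ := by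
    intro i₀ g
    simp only [conj_d]
    simp [hd, mul_ite, Finset.sum_ite_eq', Finset.mem_univ]
  have e_ipa : ∀ (i₀ : Fin n) (g : Fin n → ℂ), (∑ k, d i₀ k * C (g k)) = C (g i₀) := by
    intro i₀ g
    simp [hd, ite_mul, Finset.sum_ite_eq', Finset.mem_univ]
  have e_F : ∀ (α : Fin m) (i₀ : Fin n), (∑ i, ∑ j, H α i j * d i₀ i * d i₀ j) = H α i₀ i₀ := by
    intro α i₀
    simp [hd, mul_ite, ite_mul, Finset.sum_ite_irrel, Finset.sum_const_zero,
      Finset.sum_ite_eq', Finset.mem_univ]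
  -- value of h on diagonal deltas
  have hdiagval : ∀ i₀ : Fin n, h i₀ i₀ = ((∑ α, Complex.normSq (H α i₀ i₀) : ℝ) : ℂ) := by
    intro i₀
    have h0 := hflat (d i₀)
    rw [e_ip i₀ i₀, e_h i₀ i₀, if_pos rfl, one_mul] at h0
    simp only [e_F] at h0
    rw [sum_mul_conj (fun α => H α i₀ i₀)] at h0
    exact h0.symm
  -- positivity of the hermitian form h
  have hpos : ∀ y : Fin n → ℂ, ∃ ρ : ℝ, 0 ≤ ρ ∧ (∑ i, ∑ j, h i j * y i * C (y j)) = (ρ : ℂ) := by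
    intro y
    by_cases hy : y = 0
    · exact ⟨0, le_refl 0, by simp [hy]⟩
    · have h0 := hflat y
      rw [sum_mul_conj y, sum_mul_conj (fun α => ∑ i, ∑ j, H α i j * y i * y j)] at h0
      have hB : 0 < ∑ k, Complex.normSq (y k) := by
        obtain ⟨p, hp⟩ : ∃ p, y p ≠ 0 := by
          by_contra hcon
          push_neg at hcon
          exact hy (funext hcon)
        exact Finset.sum_pos' (fun i _ => Complex.normSq_nonneg _)
          ⟨p, Finset.mem_univ p, Complex.normSq_pos.2 hp⟩
      have hA0 : 0 ≤ ∑ α, Complex.normSq (∑ i, ∑ j, H α i j * y i * y j) :=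
        Finset.sum_nonneg fun _ _ => Complex.normSq_nonneg _
      refine ⟨(∑ α, Complex.normSq (∑ i, ∑ j, H α i j * y i * y j)) / (∑ k, Complex.normSq (y k)),
        div_nonneg hA0 hB.le, ?_⟩
      have hBne : ((∑ k, Complex.normSq (y k) : ℝ) : ℂ) ≠ 0 := by
        exact_mod_cast ne_of_gt hB
      rw [Complex.ofReal_div, eq_div_iff hBne]
      linear_combination -h0
  -- all diagonal entries of H vanish
  have hdiag : ∀ α i, H α i i = 0 := by
    by_contra hcon
    push_neg at hcon
    obtain ⟨α₀, i₀, hne⟩ := hcon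
    have hηpos : 0 < ∑ α, Complex.normSq (H α i₀ i₀) :=
      Finset.sum_pos' (fun i _ => Complex.normSq_nonneg _)
        ⟨α₀, Finset.mem_univ α₀, Complex.normSq_pos.2 hne⟩
    have li : LinearIndependent ℂ (fun (j : Fin n) => (fun α => H α i₀ j : Fin m → ℂ)) := by
      rw [Fintype.linearIndependent_iff]
      intro g hg
      have hgα : ∀ α, ∑ j, g j * H α i₀ j = 0 := by
        intro α
        have := congrFun hg α
        simpa [Finset.sum_apply, Pi.smul_apply, smul_eq_mul] using this
      have hst := star_identity n m H h hflat (d i₀) g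
      simp only [← hC] at hst
      have e_G : ∀ α : Fin m, (∑ i, ∑ j, H α i j * (d i₀ i * g j + g i * d i₀ j)) = 0 := by
        intro α
        have expand : (∑ i, ∑ j, H α i j * (d i₀ i * g j + g i * d i₀ j))
            = (∑ j, H α i₀ j * g j) + (∑ i, H α i i₀ * g i) := by
          simp [hd, mul_add, mul_ite, ite_mul, Finset.sum_add_distrib, Finset.sum_ite_irrel,
            Finset.sum_const_zero, Finset.sum_ite_eq', Finset.mem_univ]
        rw [expand]
        have h1 : (∑ j, H α i₀ j * g j) = 0 := by
          rw [← hgα α]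
          exact Finset.sum_congr rfl fun j _ => by ring
        have h2 : (∑ i, H α i i₀ * g i) = 0 := by
          rw [← hgα α]
          exact Finset.sum_congr rfl fun i _ => by rw [hsym α i i₀]; ring
        rw [h1, h2, add_zero]
      simp only [e_G, zero_mul, Finset.sum_const_zero, map_zero] at hst
      rw [e_ip i₀ i₀, if_pos rfl, one_mul, e_ipb i₀ g, e_ipa i₀ g, e_hab i₀ g, e_hba i₀ g,
        e_h i₀ i₀, sum_mul_conj g] at hst
      -- the vector y = g + g i₀ • δ_{i₀}
      set y : Fin n → ℂ := fun p => g p + g i₀ * d i₀ p with hy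
      obtain ⟨ρ, hρ0, hρeq⟩ := hpos y
      have hyconj : ∀ p, C (y p) = C (g p) + C (g i₀) * d i₀ p := by
        intro p
        simp [hy, map_add, map_mul, conj_d]
      have e_y : (∑ p, ∑ q, h p q * y p * C (y q))
          = (∑ p, ∑ q, h p q * g p * C (g q))
            + (∑ p, ∑ q, h p q * d i₀ p * C (g q)) * g i₀
            + (∑ p, ∑ q, h p q * g p * d i₀ q) * C (g i₀)
            + (∑ p, ∑ q, h p q * d i₀ p * d i₀ q) * (g i₀ * C (g i₀)) := by
        have step : ∀ p q : Fin n, h p q * y p * C (y q)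
            = h p q * g p * C (g q) + (h p q * d i₀ p * C (g q)) * g i₀
              + (h p q * g p * d i₀ q) * C (g i₀)
              + (h p q * d i₀ p * d i₀ q) * (g i₀ * C (g i₀)) := by
          intro p q
          rw [hyconj, show y p = g p + g i₀ * d i₀ p from rfl]
          ring
        simp only [step, Finset.sum_add_distrib, ← Finset.sum_mul]
      have e_dd : (∑ p, ∑ q, h p q * d i₀ p * d i₀ q) = h i₀ i₀ := by
        simp [hd, mul_ite, ite_mul, Finset.sum_ite_irrel, Finset.sum_const_zero,
          Finset.sum_ite_eq', Finset.mem_univ]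
      have e_gd : (∑ p, ∑ q, h p q * g p * d i₀ q) = ∑ p, h p i₀ * g p := by
        simp [hd, mul_ite, ite_mul, Finset.sum_ite_irrel, Finset.sum_const_zero,
          Finset.sum_ite_eq', Finset.mem_univ, mul_comm]
      rw [e_y, e_hab i₀ g, e_gd, e_dd, hdiagval i₀] at hρeq
      rw [hdiagval i₀] at hst
      -- combine: 0 = ρ + (S - |g i₀|²) η
      have hgg : g i₀ * C (g i₀) = ((Complex.normSq (g i₀) : ℝ) : ℂ) := Complex.mul_conj (g i₀)
      have key : ((ρ + ((∑ k, Complex.normSq (g k)) - Complex.normSq (g i₀))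
          * (∑ α, Complex.normSq (H α i₀ i₀)) : ℝ) : ℂ) = 0 := by
        rw [Complex.ofReal_add, Complex.ofReal_mul, Complex.ofReal_sub]
        linear_combination -hρeq - hst + ((∑ α, Complex.normSq (H α i₀ i₀) : ℝ) : ℂ) * hgg
      rw [Complex.ofReal_eq_zero] at key
      have hS1 : Complex.normSq (g i₀) ≤ ∑ k, Complex.normSq (g k) :=
        Finset.single_le_sum (fun i _ => Complex.normSq_nonneg _) (Finset.mem_univ i₀)
      have hSeq : ∑ k, Complex.normSq (g k) = Complex.normSq (g i₀) := by
        nlinarith [hρ0, hηpos, hS1]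
      have hzero : ∀ j, j ≠ i₀ → g j = 0 := by
        intro j hj
        have hsplit : ∑ k, Complex.normSq (g k)
            = Complex.normSq (g i₀) + ∑ k ∈ Finset.univ.erase i₀, Complex.normSq (g k) := by
          rw [← Finset.add_sum_erase _ _ (Finset.mem_univ i₀)]
        have hzsum : ∑ k ∈ Finset.univ.erase i₀, Complex.normSq (g k) = 0 := by
          rw [hsplit] at hSeq
          linarith
        have := (Finset.sum_eq_zero_iff_of_nonneg
          (fun i _ => Complex.normSq_nonneg (g i))).1 hzsum j
          (Finset.mem_erase.2 ⟨hj, Finset.mem_univ j⟩)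
        exact Complex.normSq_eq_zero.1 this
      intro j
      by_cases hj : j = i₀
      · subst hj
        have h1 := hgα α₀
        rw [Finset.sum_eq_single j (fun b _ hb => by rw [hzero b hb, zero_mul])
          (fun hb => absurd (Finset.mem_univ j) hb)] at h1
        rcases mul_eq_zero.1 h1 with h2 | h2
        · exact h2
        · exact absurd h2 hne
      · exact hzero j hj
    have hcard := li.fintype_card_le_finrank
    rw [Module.finrank_fintype_fun_eq_card] at hcard
    simp only [Fintype.card_fin] at hcard
    omega
  -- conclude
  have hdiag0 : ∀ i, h i i = 0 := by
    intro i
    rw [hdiagval i]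
    norm_cast
    simp [hdiag]
  intro α i j
  rcases eq_or_ne i j with rfl | hij
  · exact hdiag α i
  · have hst := star_identity n m H h hflat (d i) (d j)
    have e_G : ∀ α : Fin m, (∑ p, ∑ q, H α p q * (d i p * d j q + d j p * d i q))
        = 2 * H α i j := by
      intro α
      have expand : (∑ p, ∑ q, H α p q * (d i p * d j q + d j p * d i q))
          = H α i j + H α j i := by
        simp [hd, mul_add, mul_ite, ite_mul, Finset.sum_add_distrib, Finset.sum_ite_irrel,
          Finset.sum_const_zero, Finset.sum_ite_eq', Finset.mem_univ]
      rw [expand, ← hsym α i j]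
      ring
    simp only [e_G] at hst
    rw [e_ip i i, e_ip j j, e_ip i j, e_ip j i, if_pos rfl, if_pos rfl, if_neg hij,
      if_neg (Ne.symm hij), e_h i i, e_h j j, hdiag0 i, hdiag0 j,
      sum_mul_conj (fun α => 2 * H α i j)] at hst
    simp only [one_mul, zero_mul, mul_zero, add_zero, zero_add] at hst
    have hzero : ∑ α, Complex.normSq (2 * H α i j) = 0 := by exact_mod_cast hst
    have := (Finset.sum_eq_zero_iff_of_nonneg
      (fun a _ => Complex.normSq_nonneg (2 * H a i j))).1 hzero α (Finset.mem_univ α)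
    have h2 : (2 : ℂ) * H α i j = 0 := Complex.normSq_eq_zero.1 this
    have : H α i j = 0 := by linear_combination h2 / 2
    exact this
end

section
/- Let H ∈ S^{2,0} ⊗ W satisfy the Bochner-flat condition. If m < 2n − 1, then the rank k of H is at most 1, i.e., the asymptotic subspace {v ∈ C^n : H(v,v) = 0} has complex codimension at most 1. -/
/-!
Polarizing the flatness identity `|H(z,z)|² = |z|² ⟨Az, z⟩` computes the Gram matrix of the
vectors `H(x,y) ∈ ℂᵐ`: `⟨H(x,y), H(u,v)⟩ = ⟨x,u⟩⟨Ay,v⟩ + ⟨x,v⟩⟨Ay,u⟩ + ⟨y,u⟩⟨Ax,v⟩ + ⟨y,v⟩⟨Ax,u⟩`.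
Already on the diagonal the identity shows that `A` is positive semidefinite with kernel the
asymptotic subspace `{v : H(v,v) = 0}`. For an orthonormal eigenbasis `eᵢ` of `A` with eigenvalues
`λᵢ ≥ 0`, the vectors `H(e_p, e_q)` indexed by unordered pairs `{p, q}` are pairwise orthogonal,
and nonzero when `λ_p + λ_q > 0`. Two positive eigenvalues `λ₁, λ₂` would therefore give the
`2n - 1` independent vectors `H(e₁, e_j)`, `H(e₂, e_j)` (`j ≠ 1`) in `ℂᵐ`, so `A` has rank `≤ 1`.
-/

open Complex ComplexConjugate Matrix Module
open scoped ComplexOrder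

section Polarization

variable {V W : Type*} [AddCommGroup V] [Module ℂ V] [AddCommGroup W] [Module ℂ W]
  {B : V →ₗ[ℂ] V →ₗ[ℂ] W} {S : W →ₗ[ℂ] W →ₗ⋆[ℂ] ℂ} {N P : V →ₗ[ℂ] V →ₗ⋆[ℂ] ℂ}

/-- The identity at `z + t • w` is a polynomial of bidegree `≤ (2, 2)` in `t, t̄` whose
`t²`-coefficient is the claim; the eight values `t = ±1, ±i, ±(1 + i), ±(1 - i)` isolate it. -/
theorem flat_polarization_self (hflat : ∀ z, S (B z z) (B z z) = N z z * P z z) (z w : V) :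
    S (B w w) (B z z) = N w z * P w z := by
  have e (t : ℂ) := hflat (z + t • w)
  simp only [map_add, map_smul, LinearMap.map_smulₛₗ, LinearMap.add_apply, LinearMap.smul_apply,
    smul_eq_mul] at e
  have e₁ := e 1
  have e₂ := e (-1)
  have e₃ := e I
  have e₄ := e (-I)
  have e₅ := e (1 + I)
  have e₆ := e (-1 - I)
  have e₇ := e (1 - I)
  have e₈ := e (-1 + I)
  simp only [map_one, map_neg, map_add, map_sub, conj_I] at e₁ e₂ e₃ e₄ e₅ e₆ e₇ e₈
  linear_combination (norm := ring_nf) (e₁ + e₂ - e₃ - e₄) / 8 - I / 16 * (e₅ + e₆ - e₇ - e₈)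
  simp only [I_sq, I_pow_four]
  ring

theorem flat_polarization_left (hflat : ∀ z, S (B z z) (B z z) = N z z * P z z) (x y z : V) :
    S (B x y + B y x) (B z z) = N x z * P y z + N y z * P x z := by
  have hxy := flat_polarization_self hflat z (x + y)
  simp only [map_add, LinearMap.add_apply] at hxy ⊢
  linear_combination hxy - flat_polarization_self hflat z x - flat_polarization_self hflat z y

theorem flat_polarization (hflat : ∀ z, S (B z z) (B z z) = N z z * P z z) (x y u v : V) :
    S (B x y + B y x) (B u v + B v u) =
      N x u * P y v + N x v * P y u + N y u * P x v + N y v * P x u := by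
  have huv := flat_polarization_left hflat x y (u + v)
  have hu := flat_polarization_left hflat x y u
  have hv := flat_polarization_left hflat x y v
  simp only [map_add, LinearMap.add_apply] at huv hu hv ⊢
  linear_combination huv - hu - hv

/-- By `flat_polarization`, the Gram matrix of the vectors `B (e p) (e q) + B (e q) (e p)` only
depends on the unordered pair `{p, q}`: it is diagonal, with entries `(1 + δ_pq) (μ p + μ q)`. -/
theorem card_le_finrank_of_flat [FiniteDimensional ℂ W]
    (hflat : ∀ z, S (B z z) (B z z) = N z z * P z z) {ι : Type*} [DecidableEq ι] {e : ι → V}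
    {μ : ι → ℂ} (hN : ∀ i j, N (e i) (e j) = if i = j then 1 else 0)
    (hP : ∀ i j, P (e i) (e j) = if i = j then μ i else 0) {T : Type*} [Fintype T]
    (p q : T → ι) (hpq : Function.Injective fun a => s(p a, q a))
    (hμ : ∀ a, μ (p a) + μ (q a) ≠ 0) : Fintype.card T ≤ finrank ℂ W := by
  let v a := B (e (p a)) (e (q a)) + B (e (q a)) (e (p a))
  have horth : S.IsOrthoᵢ v := LinearMap.isOrthoᵢ_def.mpr fun a b hab => by
    have hne := hpq.ne hab
    simp only [Ne, Sym2.eq_iff, not_or, not_and_or] at hne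
    simp only [v, flat_polarization hflat, hN, hP]
    split_ifs <;> simp_all
  have hself : ∀ a, S (v a) (v a) ≠ 0 := fun a => by
    have hμa := hμ a
    simp only [v, flat_polarization hflat, hN, hP]
    by_cases h : p a = q a
    · rw [h] at hμa ⊢
      simp only [if_true]
      contrapose! hμa
      linear_combination hμa / 2
    · simpa [h, Ne.symm h, add_comm] using hμa
  exact (LinearMap.linearIndependent_of_isOrthoᵢ horth hself).fintype_card_le_finrank

end Polarization

namespace Matrix

variable {ι κ : Type*} [Fintype ι]

def sesqForm (A : Matrix ι ι ℂ) : (ι → ℂ) →ₗ[ℂ] (ι → ℂ) →ₗ⋆[ℂ] ℂ :=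
  LinearMap.mk₂'ₛₗ (RingHom.id ℂ) (starRingEnd ℂ) (fun x y => star y ⬝ᵥ A *ᵥ x)
    (fun _ _ _ => by simp [mulVec_add, dotProduct_add])
    (fun _ _ _ => by simp [mulVec_smul])
    (fun _ _ _ => by simp [star_add, add_dotProduct])
    (fun _ _ _ => by simp [star_smul])

@[simp]
theorem sesqForm_apply (A : Matrix ι ι ℂ) (x y : ι → ℂ) : sesqForm A x y = star y ⬝ᵥ A *ᵥ x :=
  rfl

theorem sesqForm_transpose_apply_self (A : Matrix ι ι ℂ) (z : ι → ℂ) :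
    sesqForm Aᵀ z z = ∑ i, ∑ j, A i j * z i * conj (z j) := by
  simp only [sesqForm_apply, dotProduct, mulVec, transpose_apply, Pi.star_apply, Complex.star_def,
    Finset.mul_sum]
  rw [Finset.sum_comm]
  exact Finset.sum_congr rfl fun _ _ => Finset.sum_congr rfl fun _ _ => by ring

def vecBilin (H : κ → Matrix ι ι ℂ) : (ι → ℂ) →ₗ[ℂ] (ι → ℂ) →ₗ[ℂ] (κ → ℂ) :=
  LinearMap.mk₂ ℂ (fun x y α => x ⬝ᵥ H α *ᵥ y)
    (fun _ _ _ => by ext; simp [add_dotProduct])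
    (fun _ _ _ => by ext; simp)
    (fun _ _ _ => by ext; simp [mulVec_add, dotProduct_add])
    (fun _ _ _ => by ext; simp [mulVec_smul])

@[simp]
theorem vecBilin_apply (H : κ → Matrix ι ι ℂ) (x y : ι → ℂ) (α : κ) :
    vecBilin H x y α = x ⬝ᵥ H α *ᵥ y :=
  rfl

theorem vecBilin_apply_self (H : κ → Matrix ι ι ℂ) (z : ι → ℂ) (α : κ) :
    vecBilin H z z α = ∑ i, ∑ j, H α i j * z i * z j := by
  simp only [vecBilin_apply, dotProduct, mulVec, Finset.mul_sum]
  exact Finset.sum_congr rfl fun _ _ => Finset.sum_congr rfl fun _ _ => by ring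

variable [DecidableEq ι]

theorem sesqForm_one_apply_self (z : ι → ℂ) : sesqForm 1 z z = ∑ k, z k * conj (z k) := by
  simp [dotProduct, mul_comm]

theorem posSemidef_of_forall_dotProduct_mulVec_nonneg {A : Matrix ι ι ℂ}
    (hA : ∀ x, 0 ≤ star x ⬝ᵥ (A *ᵥ x)) : A.PosSemidef := by
  refine .of_dotProduct_mulVec_nonneg ?_ hA
  rw [← isSymmetric_toEuclideanLin_iff, LinearMap.isSymmetric_iff_inner_map_self_real]
  intro v
  have hreal : conj (star v ⬝ᵥ (A *ᵥ v)) = star v ⬝ᵥ (A *ᵥ v) :=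
    conj_eq_iff_im.mpr (nonneg_iff.mp (hA v)).2.symm
  have hinner : v.ofLp ⬝ᵥ star (A *ᵥ v.ofLp) = star (star v.ofLp ⬝ᵥ (A *ᵥ v.ofLp)) := by
    rw [star_dotProduct, star_star, dotProduct_comm]
  simpa [EuclideanSpace.inner_eq_star_dotProduct, hinner] using hreal.symm

theorem IsHermitian.star_eigenvectorBasis_dotProduct {A : Matrix ι ι ℂ} (hA : A.IsHermitian)
    (i j : ι) :
    star ⇑(hA.eigenvectorBasis j) ⬝ᵥ ⇑(hA.eigenvectorBasis i) = if i = j then 1 else 0 := by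
  rw [dotProduct_comm, ← EuclideanSpace.inner_eq_star_dotProduct,
    orthonormal_iff_ite.mp hA.eigenvectorBasis.orthonormal]
  simp only [eq_comm]

theorem IsHermitian.star_eigenvectorBasis_dotProduct_mulVec {A : Matrix ι ι ℂ}
    (hA : A.IsHermitian) (i j : ι) :
    star ⇑(hA.eigenvectorBasis j) ⬝ᵥ A *ᵥ ⇑(hA.eigenvectorBasis i) =
      if i = j then (hA.eigenvalues i : ℂ) else 0 := by
  rw [hA.mulVec_eigenvectorBasis, dotProduct_smul, hA.star_eigenvectorBasis_dotProduct]
  split_ifs <;> simp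

end Matrix

section BochnerFlat

variable {ι κ : Type*} [Fintype ι] [DecidableEq ι] [Fintype κ] [DecidableEq κ]

/-- The paper's quotient `γ(H,H) / |z|²` is the form `z ↦ z⋆ A z`. -/
def IsBochnerFlat (H : κ → Matrix ι ι ℂ) (A : Matrix ι ι ℂ) : Prop :=
  ∀ z, sesqForm 1 (vecBilin H z z) (vecBilin H z z) = sesqForm 1 z z * sesqForm A z z

theorem isBochnerFlat_transpose_iff {H : κ → Matrix ι ι ℂ} {h : Matrix ι ι ℂ} :
    IsBochnerFlat H hᵀ ↔ ∀ z : ι → ℂ,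
      ∑ α, (∑ i, ∑ j, H α i j * z i * z j) * conj (∑ k, ∑ l, H α k l * z k * z l) =
        (∑ k, z k * conj (z k)) * (∑ i, ∑ j, h i j * z i * conj (z j)) := by
  simp only [IsBochnerFlat, sesqForm_one_apply_self, sesqForm_transpose_apply_self,
    vecBilin_apply_self]

namespace IsBochnerFlat

variable {H : κ → Matrix ι ι ℂ} {A : Matrix ι ι ℂ}

theorem posSemidef (hf : IsBochnerFlat H A) : A.PosSemidef := by
  refine posSemidef_of_forall_dotProduct_mulVec_nonneg fun x => ?_
  rcases eq_or_ne x 0 with rfl | hx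
  · simp
  have hflat := hf x
  simp only [sesqForm_apply, one_mulVec] at hflat
  have hnorm : 0 < star x ⬝ᵥ x := dotProduct_star_self_pos_iff.mpr hx
  have h := mul_nonneg (inv_nonneg.mpr hnorm.le) (dotProduct_star_self_nonneg (vecBilin H x x))
  rwa [hflat, inv_mul_cancel_left₀ hnorm.ne'] at h

theorem mulVec_eq_zero_iff (hf : IsBochnerFlat H A) (v : ι → ℂ) :
    A *ᵥ v = 0 ↔ vecBilin H v v = 0 := by
  have hflat := hf v
  simp only [sesqForm_apply, one_mulVec] at hflat
  rw [← hf.posSemidef.dotProduct_mulVec_zero_iff, ← dotProduct_star_self_eq_zero, hflat,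
    mul_eq_zero, dotProduct_star_self_eq_zero, or_iff_right_of_imp]
  rintro rfl
  simp

theorem rank_le_one (hf : IsBochnerFlat H A)
    (hcard : Fintype.card κ < 2 * Fintype.card ι - 1) : A.rank ≤ 1 := by
  have hA := hf.posSemidef
  set μ := hA.1.eigenvalues
  rw [hA.1.rank_eq_card_non_zero_eigs]
  by_contra! hlt
  obtain ⟨⟨i₁, h₁⟩, ⟨i₂, h₂⟩, hne⟩ := Fintype.one_lt_card_iff.mp hlt
  replace hne : i₁ ≠ i₂ := fun h => hne (Subtype.ext h)
  let p : ι ⊕ {j // j ≠ i₁} → ι := Sum.elim (fun _ => i₁) (fun _ => i₂)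
  let q : ι ⊕ {j // j ≠ i₁} → ι := Sum.elim id Subtype.val
  have hpq : Function.Injective fun a => s(p a, q a) := by
    rintro (j | ⟨j, hj⟩) (j' | ⟨j', hj'⟩) h <;>
      simp only [p, q, Sum.elim_inl, Sum.elim_inr, id_eq, Sym2.eq_iff] at h <;> grind
  have hμ : ∀ a, (μ (p a) : ℂ) + μ (q a) ≠ 0 := by
    have hpos (i) (hi : μ i ≠ 0) (j) : μ i + μ j ≠ 0 :=
      (add_pos_of_pos_of_nonneg ((hA.eigenvalues_nonneg i).lt_of_ne' hi)
        (hA.eigenvalues_nonneg j)).ne'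
    rintro (j | j)
    · exact_mod_cast hpos i₁ h₁ j
    · exact_mod_cast hpos i₂ h₂ j
  have hle := card_le_finrank_of_flat hf (e := fun i => ⇑(hA.1.eigenvectorBasis i))
    (fun i j => by simpa using hA.1.star_eigenvectorBasis_dotProduct i j)
    (fun i j => by simpa using hA.1.star_eigenvectorBasis_dotProduct_mulVec i j) p q hpq hμ
  simp only [ne_eq, Fintype.card_sum, Fintype.card_subtype_compl, Fintype.card_unique,
    Module.finrank_fintype_fun_eq_card] at hle
  have hι : 0 < Fintype.card ι := Fintype.card_pos_iff.mpr ⟨i₁⟩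
  omega

end IsBochnerFlat

end BochnerFlat

theorem bochner_flat_rank_le_one_general (n m : ℕ) (hm : m < 2 * n - 1)
    (H : Fin m → Fin n → Fin n → ℂ)
    (hflat : ∃ h : Fin n → Fin n → ℂ, ∀ z : Fin n → ℂ,
      ∑ α, (∑ i, ∑ j, H α i j * z i * z j)
          * (starRingEnd ℂ) (∑ k, ∑ l, H α k l * z k * z l)
        = (∑ k, z k * (starRingEnd ℂ) (z k))
          * (∑ i, ∑ j, h i j * z i * (starRingEnd ℂ) (z j))) :
    ∃ S : Submodule ℂ (Fin n → ℂ),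
      (S : Set (Fin n → ℂ)) = {v | ∀ α, ∑ i, ∑ j, H α i j * v i * v j = 0} ∧
      Module.finrank ℂ S + 1 ≥ n := by
  obtain ⟨h, hh⟩ := hflat
  have hf : IsBochnerFlat (fun α => of (H α)) (of h)ᵀ := isBochnerFlat_transpose_iff.mpr hh
  refine ⟨LinearMap.ker (of h)ᵀ.mulVecLin, ?_, ?_⟩
  · ext v
    simp only [SetLike.mem_coe, LinearMap.mem_ker, mulVecLin_apply, hf.mulVec_eq_zero_iff,
      funext_iff, Pi.zero_apply, vecBilin_apply_self, of_apply, Set.mem_ofPred_eq]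
  · have hrank := hf.rank_le_one (by simpa using hm)
    have hdim := LinearMap.finrank_range_add_finrank_ker (of h)ᵀ.mulVecLin
    rw [finrank_fin_fun] at hdim
    rw [Matrix.rank] at hrank
    omega

/-- If `H` is Bochner-flat and `m < 2n − 1`, then the rank of `H` is at most `1`:
the asymptotic subspace `{v : H(v,v) = 0}` has complex codimension at most `1`. -/
theorem bochner_flat_rank_le_one (n m : ℕ) (hm : m < 2 * n - 1)
    (H : Fin m → Fin n → Fin n → ℂ)
    (hsym : ∀ α i j, H α i j = H α j i)
    (hflat : ∃ h : Fin n → Fin n → ℂ, ∀ z : Fin n → ℂ,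
      ∑ α, (∑ i, ∑ j, H α i j * z i * z j)
          * (starRingEnd ℂ) (∑ k, ∑ l, H α k l * z k * z l)
        = (∑ k, z k * (starRingEnd ℂ) (z k))
          * (∑ i, ∑ j, h i j * z i * (starRingEnd ℂ) (z j))) :
    ∃ S : Submodule ℂ (Fin n → ℂ),
      (S : Set (Fin n → ℂ)) = {v | ∀ α, ∑ i, ∑ j, H α i j * v i * v j = 0} ∧
      Module.finrank ℂ S + 1 ≥ n :=
  bochner_flat_rank_le_one_general n m hm H hflat
end

section
/- Let H be the rank-one symmetric form on C^n with values in C^m given by H^α_{ij} = H^α_i δ_{jn} + H^α_j δ_{in} for vectors ν_i = (H^α_i)_α ∈ C^m, 1 ≤ i ≤ n. Then γ(H,H)(z, z, conj z, conj z) = Σ_α |Σ_{ij} H^α_{ij} z^i z^j|^2 is divisible by |z|^2 (Bochner-flat) if ⟨ν_i, ν_j⟩ = 0 for all i ≠ j and ⟨ν_i, ν_i⟩ = ⟨ν_j, ν_j⟩ for all i, j. -/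
/-- The rank-one symmetric form `H^α_{ij} = ν_i^α δ_{jn} + ν_j^α δ_{in}` (so that
`H(z,z)^α = 2 zⁿ Σ_i ν_i^α z^i`) is Bochner-flat if the vectors `ν_i ∈ ℂ^m` are pairwise
orthogonal and have equal norms. -/
theorem rank_one_bochner_flat (n m : ℕ) (hn : 0 < n)
    (ln : Fin n) (hln : (ln : ℕ) = n - 1)
    (ν : Fin n → Fin m → ℂ)
    (horth : ∀ i j, i ≠ j → ∑ α, ν i α * (starRingEnd ℂ) (ν j α) = 0)
    (hnorm : ∀ i j, ∑ α, ν i α * (starRingEnd ℂ) (ν i α)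
      = ∑ α, ν j α * (starRingEnd ℂ) (ν j α)) :
    ∃ h : Fin n → Fin n → ℂ, ∀ z : Fin n → ℂ,
      ∑ α, (2 * z ln * ∑ i, ν i α * z i)
          * (starRingEnd ℂ) (2 * z ln * ∑ i, ν i α * z i)
        = (∑ k, z k * (starRingEnd ℂ) (z k))
          * (∑ i, ∑ j, h i j * z i * (starRingEnd ℂ) (z j)) := by
  set c := ∑ α, ν ln α * (starRingEnd ℂ) (ν ln α) with hc
  refine ⟨fun i j => if i = ln ∧ j = ln then 4 * c else 0, fun z => ?_⟩
  have key : ∑ α, (∑ i, ν i α * z i) * (starRingEnd ℂ) (∑ i, ν i α * z i)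
      = c * ∑ i, z i * (starRingEnd ℂ) (z i) := by
    calc ∑ α, (∑ i, ν i α * z i) * (starRingEnd ℂ) (∑ i, ν i α * z i)
        = ∑ α, ∑ i, ∑ j, (ν i α * (starRingEnd ℂ) (ν j α)) * (z i * (starRingEnd ℂ) (z j)) := by
          refine Finset.sum_congr rfl fun α _ => ?_
          rw [map_sum, Finset.sum_mul_sum]
          refine Finset.sum_congr rfl fun i _ => Finset.sum_congr rfl fun j _ => ?_
          simp only [map_mul]; ring
      _ = ∑ i, ∑ j, (∑ α, ν i α * (starRingEnd ℂ) (ν j α)) * (z i * (starRingEnd ℂ) (z j)) := by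
          rw [Finset.sum_comm]
          refine Finset.sum_congr rfl fun i _ => ?_
          rw [Finset.sum_comm]
          simp [Finset.sum_mul]
      _ = ∑ i, c * (z i * (starRingEnd ℂ) (z i)) := by
          refine Finset.sum_congr rfl fun i _ => ?_
          rw [Finset.sum_eq_single i]
          · rw [hnorm i ln]
          · intro j _ hj
            rw [horth i j (Ne.symm hj), zero_mul]
          · intro hi; exact absurd (Finset.mem_univ i) hi
      _ = c * ∑ i, z i * (starRingEnd ℂ) (z i) := by rw [Finset.mul_sum]
  have lhs : ∑ α, (2 * z ln * ∑ i, ν i α * z i)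
      * (starRingEnd ℂ) (2 * z ln * ∑ i, ν i α * z i)
      = 4 * (z ln * (starRingEnd ℂ) (z ln)) *
        ∑ α, (∑ i, ν i α * z i) * (starRingEnd ℂ) (∑ i, ν i α * z i) := by
    rw [Finset.mul_sum]
    refine Finset.sum_congr rfl fun α _ => ?_
    simp only [map_mul, map_ofNat]
    ring
  have rhs : (∑ i, ∑ j, (if i = ln ∧ j = ln then 4 * c else 0) * z i * (starRingEnd ℂ) (z j))
      = 4 * c * (z ln * (starRingEnd ℂ) (z ln)) := by
    rw [Finset.sum_eq_single ln]
    · rw [Finset.sum_eq_single ln]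
      · simp; ring
      · intro j _ hj; simp [hj]
      · intro hj; exact absurd (Finset.mem_univ ln) hj
    · intro i _ hi
      refine Finset.sum_eq_zero fun j _ => ?_
      simp [hi]
    · intro hi; exact absurd (Finset.mem_univ ln) hi
  rw [lhs, key, rhs]
  ring
end

section
/- Suppose ν_1, ..., ν_n ∈ C^m satisfy: the polynomial Σ_α |2 z^n Σ_i ν_i^α z^i|^2 in (z, conj z) is divisible by |z|^2 = Σ_k |z^k|^2 (as real polynomials). Then ⟨ν_i, ν_j⟩ = 0 for i ≠ j and |ν_i|^2 = |ν_j|^2 for all i, j; consequently there exists λ ≥ 0 and a unitary transformation U of C^m with U ν_i = λ e_i for each i (where e_i are the first n standard basis vectors), provided m ≥ n. -/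
/-!
Write `V z = ∑ i, z i • ν i`. The hypothesis says `|z_l|² ‖V z‖² = ‖z‖² q(z)` for a sesquilinear
form `q`, where `l` is the distinguished index. On the line `z = w + t e_l` with `w ⊥ e_l` and `t`
real both sides are quartic polynomials in `t`; comparing coefficients gives
`‖V w‖² = ‖ν_l‖² ‖w‖²` and `Re ⟪V w, ν_l⟫ = 0`, hence `‖V z‖² = ‖ν_l‖² ‖z‖²` for every `z`.
By polarization the `ν i = V e_i` are orthogonal with common norm `‖ν_l‖`, and completing the
orthonormal family `ν i / ‖ν_l‖` to an orthonormal basis of `ℂ^m` produces the unitary `U`.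
-/

open scoped InnerProductSpace ComplexConjugate Matrix

theorem quartic_coeffs_eq_zero {a b c d e : ℂ}
    (h : ∀ t : ℝ, a + b * t + c * t ^ 2 + d * t ^ 3 + e * t ^ 4 = 0) :
    a = 0 ∧ b = 0 ∧ c = 0 ∧ d = 0 ∧ e = 0 := by
  have h₀ := h 0
  have h₁ := h 1
  have h₁' := h (-1)
  have h₂ := h 2
  have h₂' := h (-2)
  push_cast at h₀ h₁ h₁' h₂ h₂'
  refine ⟨by linear_combination h₀, ?_, ?_, ?_, ?_⟩
  · linear_combination (2 / 3 : ℂ) * (h₁ - h₁') - (1 / 12 : ℂ) * (h₂ - h₂')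
  · linear_combination (2 / 3 : ℂ) * (h₁ + h₁') - (5 / 4 : ℂ) * h₀ - (1 / 24 : ℂ) * (h₂ + h₂')
  · linear_combination (1 / 12 : ℂ) * (h₂ - h₂') - (1 / 6 : ℂ) * (h₁ - h₁')
  · linear_combination (1 / 24 : ℂ) * (h₂ + h₂') - (1 / 6 : ℂ) * (h₁ + h₁') + (1 / 4 : ℂ) * h₀

theorem inner_map_map_eq_mul_inner_of_norm_sq {𝕜 E F : Type*} [RCLike 𝕜]
    [NormedAddCommGroup E] [InnerProductSpace 𝕜 E] [NormedAddCommGroup F] [InnerProductSpace 𝕜 F]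
    (V : E →ₗ[𝕜] F) {c : ℝ} (hV : ∀ z, ‖V z‖ ^ 2 = c * ‖z‖ ^ 2) (x y : E) :
    ⟪V x, V y⟫_𝕜 = c * ⟪x, y⟫_𝕜 := by
  have hV' (z : E) : (‖V z‖ : 𝕜) ^ 2 = c * (‖z‖ : 𝕜) ^ 2 := by exact_mod_cast hV z
  rw [inner_eq_sum_norm_sq_div_four (V x), ← map_add, ← map_sub, ← map_smul, ← map_sub,
    ← map_add, hV', hV', hV', hV', inner_eq_sum_norm_sq_div_four x y]
  ring

section

variable {E F : Type*} [NormedAddCommGroup E] [InnerProductSpace ℂ E]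
  [NormedAddCommGroup F] [InnerProductSpace ℂ F]

variable (V : E →ₗ[ℂ] F) (T : E →ₗ[ℂ] E) {e : E}

theorem norm_sq_map_of_inner_eq_zero (he : ‖e‖ = 1)
    (hV : ∀ z, ((‖⟪e, z⟫_ℂ‖ ^ 2 * ‖V z‖ ^ 2 : ℝ) : ℂ) = (‖z‖ ^ 2 : ℝ) * ⟪z, T z⟫_ℂ)
    {w : E} (hw : ⟪e, w⟫_ℂ = 0) :
    ‖V w‖ ^ 2 = ‖V e‖ ^ 2 * ‖w‖ ^ 2 ∧ (⟪V w, V e⟫_ℂ).re = 0 := by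
  rcases eq_or_ne w 0 with rfl | hw₀
  · simp
  have hwe : ⟪w, e⟫_ℂ = 0 := by rw [← inner_conj_symm, hw, map_zero]
  have hcoeffs := quartic_coeffs_eq_zero (a := -(‖w‖ ^ 2 * ⟪w, T w⟫_ℂ))
    (b := -(‖w‖ ^ 2 * (⟪w, T e⟫_ℂ + ⟪e, T w⟫_ℂ)))
    (c := ‖V w‖ ^ 2 - ‖w‖ ^ 2 * ⟪e, T e⟫_ℂ - ⟪w, T w⟫_ℂ)
    (d := 2 * (⟪V w, V e⟫_ℂ).re - (⟪w, T e⟫_ℂ + ⟪e, T w⟫_ℂ))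
    (e := ‖V e‖ ^ 2 - ⟪e, T e⟫_ℂ) fun t => by
      have h := hV (w + (t : ℂ) • e)
      have h₁ : ‖⟪e, w + (t : ℂ) • e⟫_ℂ‖ ^ 2 = t ^ 2 := by
        simp [hw, inner_self_eq_norm_sq_to_K, he]
      have h₂ : ‖w + (t : ℂ) • e‖ ^ 2 = ‖w‖ ^ 2 + t ^ 2 := by
        rw [@norm_add_sq ℂ, inner_smul_right, hwe, norm_smul, he]
        simp
      have h₃ : ‖V w + (t : ℂ) • V e‖ ^ 2
          = ‖V w‖ ^ 2 + 2 * t * (⟪V w, V e⟫_ℂ).re + t ^ 2 * ‖V e‖ ^ 2 := by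
        rw [@norm_add_sq ℂ, inner_smul_right, norm_smul]
        simp only [Complex.norm_real, Real.norm_eq_abs, mul_pow, sq_abs, RCLike.re_to_complex,
          Complex.re_ofReal_mul]
        ring
      rw [map_add, map_smul, h₁, h₂, h₃, map_add, map_smul] at h
      simp only [inner_add_left, inner_add_right, inner_smul_left, inner_smul_right,
        Complex.conj_ofReal] at h
      push_cast at h
      linear_combination h
  obtain ⟨hq, hβ, hc, hr, hk⟩ := hcoeffs
  have hw₂ : (‖w‖ : ℂ) ^ 2 ≠ 0 := by simpa using hw₀
  have hq : ⟪w, T w⟫_ℂ = 0 := by simpa [hw₂] using hq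
  have hβ : ⟪w, T e⟫_ℂ + ⟪e, T w⟫_ℂ = 0 := by simpa [hw₂] using hβ
  constructor
  · exact_mod_cast (by linear_combination hc - (‖w‖ : ℂ) ^ 2 * hk + hq :
      (‖V w‖ : ℂ) ^ 2 = ‖V e‖ ^ 2 * ‖w‖ ^ 2)
  · exact_mod_cast (by linear_combination hr / 2 + hβ / 2 : ((⟪V w, V e⟫_ℂ).re : ℂ) = 0)

theorem norm_sq_map_eq_mul_norm_sq (he : ‖e‖ = 1)
    (hV : ∀ z, ((‖⟪e, z⟫_ℂ‖ ^ 2 * ‖V z‖ ^ 2 : ℝ) : ℂ) = (‖z‖ ^ 2 : ℝ) * ⟪z, T z⟫_ℂ) (z : E) :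
    ‖V z‖ ^ 2 = ‖V e‖ ^ 2 * ‖z‖ ^ 2 := by
  set c := ⟪e, z⟫_ℂ
  set w := z - c • e
  have hz : z = w + c • e := (sub_add_cancel z _).symm
  have hw : ⟪e, w⟫_ℂ = 0 := by simp [w, c, inner_self_eq_norm_sq_to_K, he]
  have hcw : ⟪e, conj c • w⟫_ℂ = 0 := by rw [inner_smul_right, hw, mul_zero]
  obtain ⟨hVw, -⟩ := norm_sq_map_of_inner_eq_zero V T he hV hw
  have hcross : (⟪V w, c • V e⟫_ℂ).re = 0 := by
    rw [← (norm_sq_map_of_inner_eq_zero V T he hV hcw).2, map_smul, inner_smul_left,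
      inner_smul_right, Complex.conj_conj]
  have hwe : ⟪w, c • e⟫_ℂ = 0 := by
    rw [inner_smul_right, ← inner_conj_symm, hw, map_zero, mul_zero]
  calc ‖V z‖ ^ 2 = ‖V w‖ ^ 2 + ‖c‖ ^ 2 * ‖V e‖ ^ 2 := by
        rw [hz, map_add, map_smul, @norm_add_sq ℂ, RCLike.re_to_complex, hcross, norm_smul]
        ring
    _ = ‖V e‖ ^ 2 * ‖z‖ ^ 2 := by
        rw [hVw, hz, @norm_add_sq ℂ, hwe, norm_smul, he]
        simp
        ring
end

theorem EuclideanSpace.sum_mul_conj_eq_norm_sq {ι : Type*} [Fintype ι] (x : EuclideanSpace ℂ ι) :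
    ∑ k, x k * conj (x k) = ((‖x‖ ^ 2 : ℝ) : ℂ) := by
  simp [EuclideanSpace.norm_sq_eq, Complex.mul_conj']

theorem inner_toLp_eq_ite_of_forall_eq_mul {ι κ : Type*} [Fintype ι] [DecidableEq ι] [Fintype κ]
    (l : ι) (ν : ι → κ → ℂ) (h : ι → ι → ℂ)
    (hdiv : ∀ z : ι → ℂ, ∑ α, (2 * z l * ∑ i, ν i α * z i) * conj (2 * z l * ∑ i, ν i α * z i)
      = (∑ k, z k * conj (z k)) * (∑ i, ∑ j, h i j * z i * conj (z j)))
    (i j : ι) :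
    ⟪WithLp.toLp 2 (ν i), WithLp.toLp 2 (ν j)⟫_ℂ
      = if i = j then (‖WithLp.toLp 2 (ν l)‖ : ℂ) ^ 2 else 0 := by
  set V := Matrix.toEuclideanLin (Matrix.of ν)ᵀ
  have hVsingle (i : ι) : V (EuclideanSpace.single i 1) = WithLp.toLp 2 (ν i) := by
    ext α; simp [V, Matrix.toLpLin_apply]
  have hV (z : EuclideanSpace ℂ ι) :
      ((‖⟪EuclideanSpace.single l 1, z⟫_ℂ‖ ^ 2 * ‖V z‖ ^ 2 : ℝ) : ℂ)
        = (‖z‖ ^ 2 : ℝ) * ⟪z, ((4 : ℂ)⁻¹ • Matrix.toEuclideanLin (Matrix.of h)ᵀ) z⟫_ℂ := by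
    have hS (α : κ) : ∑ i, ν i α * z i = V z α := rfl
    have hQ : ⟪z, Matrix.toEuclideanLin (Matrix.of h)ᵀ z⟫_ℂ
        = ∑ i, ∑ j, h i j * z i * conj (z j) := by
      simp only [PiLp.inner_apply, RCLike.inner_apply, Matrix.toLpLin_apply, Matrix.mulVec,
        dotProduct, Finset.sum_mul]
      rw [Finset.sum_comm]
      rfl
    have hlhs : ∑ α, (2 * z l * ∑ i, ν i α * z i) * conj (2 * z l * ∑ i, ν i α * z i)
        = 4 * (z l * conj (z l)) * ∑ α, V z α * conj (V z α) := by
      rw [Finset.mul_sum]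
      exact Finset.sum_congr rfl fun α _ => by rw [hS]; simp only [map_mul, map_ofNat]; ring
    rw [LinearMap.smul_apply, inner_smul_right, hQ, EuclideanSpace.inner_single_left, map_one,
      one_mul, Complex.ofReal_mul, Complex.ofReal_pow, ← Complex.mul_conj',
      ← EuclideanSpace.sum_mul_conj_eq_norm_sq, ← EuclideanSpace.sum_mul_conj_eq_norm_sq]
    linear_combination (hdiv z - hlhs) / 4
  have hnorm := norm_sq_map_eq_mul_norm_sq V _ (by simp) hV
  rw [← hVsingle, ← hVsingle, inner_map_map_eq_mul_inner_of_norm_sq V hnorm,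
    EuclideanSpace.inner_single_left, hVsingle l]
  simp

theorem Orthonormal.exists_unitary_mulVec_eq_single {𝕜 ι κ : Type*} [RCLike 𝕜] [Fintype κ]
    [DecidableEq κ] {v : ι → EuclideanSpace 𝕜 κ} (hv : Orthonormal 𝕜 v) {f : ι → κ}
    (hf : Function.Injective f) :
    ∃ U ∈ Matrix.unitaryGroup κ 𝕜, ∀ i, U *ᵥ (v i).ofLp = Pi.single (f i) 1 := by
  have hrestrict : (Set.range f).domRestrict (Function.extend f v 0)
      = v ∘ (Equiv.ofInjective f hf).symm := by
    ext ⟨_, i, rfl⟩ : 1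
    simp [hf.extend_apply, Equiv.ofInjective_symm_apply]
  have hv' := hv.comp _ (Equiv.ofInjective f hf).symm.injective
  rw [← hrestrict] at hv'
  obtain ⟨b, hb⟩ := hv'.exists_orthonormalBasis_extension_of_card_eq (by simp)
  have hU := b.toMatrix_orthonormalBasis_mem_unitary (EuclideanSpace.basisFun κ 𝕜)
  refine ⟨_, hU, fun i => ?_⟩
  have hvb : v i = b (f i) := by rw [hb _ (Set.mem_range_self i), hf.extend_apply]
  have hchange := Module.Basis.toMatrix_mulVec_repr
    (b := (EuclideanSpace.basisFun κ 𝕜).toBasis) (b' := b.toBasis) (b (f i))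
  have hstd : ⇑((EuclideanSpace.basisFun κ 𝕜).toBasis.repr (b (f i))) = (b (f i)).ofLp := by
    ext j; simp
  have hrepr : ⇑(b.toBasis.repr (b (f i))) = Pi.single (f i) 1 := by
    ext j; simp [Pi.single_apply]
  rw [hvb]
  simpa [hstd, hrepr] using hchange

theorem exists_unitary_mulVec_eq_smul_single {𝕜 ι κ : Type*} [RCLike 𝕜] [DecidableEq ι]
    [Fintype κ] [DecidableEq κ] {v : ι → EuclideanSpace 𝕜 κ} {c : ℝ}
    (hv : ∀ i j, ⟪v i, v j⟫_𝕜 = if i = j then (c : 𝕜) ^ 2 else 0) {f : ι → κ}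
    (hf : Function.Injective f) :
    ∃ U ∈ Matrix.unitaryGroup κ 𝕜, ∀ i, U *ᵥ (v i).ofLp = Pi.single (f i) (c : 𝕜) := by
  rcases eq_or_ne c 0 with rfl | hc
  · have hv₀ (i : ι) : v i = 0 := by simpa using hv i i
    exact ⟨1, one_mem _, fun i => by simp [hv₀]⟩
  have hc' : (c : 𝕜) ≠ 0 := RCLike.ofReal_ne_zero.mpr hc
  have hw : Orthonormal 𝕜 fun i => (c : 𝕜)⁻¹ • v i := by
    rw [orthonormal_iff_ite]
    intro i j
    simp only [inner_smul_left, inner_smul_right, hv, map_inv₀, RCLike.conj_ofReal]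
    split_ifs
    · field_simp
    · simp
  obtain ⟨U, hU, hUw⟩ := hw.exists_unitary_mulVec_eq_single hf
  refine ⟨U, hU, fun i => ?_⟩
  have hvi : (v i).ofLp = (c : 𝕜) • ((c : 𝕜)⁻¹ • v i).ofLp := by simp [smul_smul, hc']
  rw [hvi, Matrix.mulVec_smul, hUw i, ← Pi.single_smul, smul_eq_mul, mul_one]

theorem rank_one_bochner_flat_normal_form_general (n m : ℕ) (hm : n ≤ m)
    (ln : Fin n)
    (ν : Fin n → Fin m → ℂ)
    (hdiv : ∃ h : Fin n → Fin n → ℂ, ∀ z : Fin n → ℂ,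
      ∑ α, (2 * z ln * ∑ i, ν i α * z i)
          * (starRingEnd ℂ) (2 * z ln * ∑ i, ν i α * z i)
        = (∑ k, z k * (starRingEnd ℂ) (z k))
          * (∑ i, ∑ j, h i j * z i * (starRingEnd ℂ) (z j))) :
    (∀ i j, i ≠ j → ∑ α, ν i α * (starRingEnd ℂ) (ν j α) = 0) ∧
    (∀ i j, ∑ α, ν i α * (starRingEnd ℂ) (ν i α)
      = ∑ α, ν j α * (starRingEnd ℂ) (ν j α)) ∧
    ∃ lam : ℝ, 0 ≤ lam ∧ ∃ U ∈ Matrix.unitaryGroup (Fin m) ℂ,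
      ∀ i : Fin n, U.mulVec (ν i) = fun a : Fin m =>
        if (a : ℕ) = (i : ℕ) then (lam : ℂ) else 0 := by
  obtain ⟨h, hdiv⟩ := hdiv
  have hgram := inner_toLp_eq_ite_of_forall_eq_mul ln ν h hdiv
  have hcoord (i j : Fin n) :
      ∑ α, ν i α * conj (ν j α) = ⟪WithLp.toLp 2 (ν j), WithLp.toLp 2 (ν i)⟫_ℂ := by
    simp [PiLp.inner_apply]
  refine ⟨fun i j hij => by rw [hcoord, hgram, if_neg hij.symm],
    fun i j => by rw [hcoord, hcoord, hgram, hgram, if_pos rfl, if_pos rfl], ?_⟩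
  obtain ⟨U, hU, hUν⟩ := exists_unitary_mulVec_eq_smul_single (c := ‖WithLp.toLp 2 (ν ln)‖)
    hgram (Fin.castLE_injective hm)
  refine ⟨_, norm_nonneg (WithLp.toLp 2 (ν ln)), U, hU, fun i => funext fun a => ?_⟩
  rw [show U *ᵥ ν i = _ from hUν i, Pi.single_apply]
  simp only [Fin.ext_iff, Fin.val_castLE]
  -- the sides differ only in the coercion `ℝ → ℂ` used (`RCLike.ofReal` vs `Complex.ofReal`)
  rfl

/-- Converse: if `Σ_α |2 zⁿ Σ_i ν_i^α z^i|²` is divisible by `|z|²` (as polynomials in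
`z, z̄`), then the `ν_i` are pairwise orthogonal with equal norms; consequently, when
`m ≥ n`, there are `λ ≥ 0` and a unitary `U` of `ℂ^m` with `U ν_i = λ e_i` for all `i`. -/
theorem rank_one_bochner_flat_normal_form (n m : ℕ) (hn : 0 < n) (hm : n ≤ m)
    (ln : Fin n) (hln : (ln : ℕ) = n - 1)
    (ν : Fin n → Fin m → ℂ)
    (hdiv : ∃ h : Fin n → Fin n → ℂ, ∀ z : Fin n → ℂ,
      ∑ α, (2 * z ln * ∑ i, ν i α * z i)
          * (starRingEnd ℂ) (2 * z ln * ∑ i, ν i α * z i)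
        = (∑ k, z k * (starRingEnd ℂ) (z k))
          * (∑ i, ∑ j, h i j * z i * (starRingEnd ℂ) (z j))) :
    (∀ i j, i ≠ j → ∑ α, ν i α * (starRingEnd ℂ) (ν j α) = 0) ∧
    (∀ i j, ∑ α, ν i α * (starRingEnd ℂ) (ν i α)
      = ∑ α, ν j α * (starRingEnd ℂ) (ν j α)) ∧
    ∃ lam : ℝ, 0 ≤ lam ∧ ∃ U ∈ Matrix.unitaryGroup (Fin m) ℂ,
      ∀ i : Fin n, U.mulVec (ν i) = fun a : Fin m =>
        if (a : ℕ) = (i : ℕ) then (lam : ℂ) else 0 :=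
  rank_one_bochner_flat_normal_form_general n m hm ln ν hdiv
end

section
/- Let μ ≥ 1 and suppose real constants x_1, ..., x_μ and y_1, ..., y_μ satisfy x_1 = 1, x_μ = y_μ, and x_A^2 = y_A^2 + x_{A+1}^2 for 1 ≤ A ≤ μ − 1. Then the generalized Whitney map F : C^{n+1} → C^{μ(n+1)} given by F(z^i, z^0) = (x_1 z^i, x_2 z^i z^0, ..., x_μ z^i (z^0)^{μ−1}, y_1 z^0, y_2 (z^0)^2, ..., y_μ (z^0)^μ) maps the unit sphere of C^{n+1} into the unit sphere of C^{μ(n+1)}: if |z^0|^2 + Σ_i |z^i|^2 = 1 then |F(z)|^2 = 1. -/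
/-- The generalized Whitney map
`F(z) = (x_1 z^i, x_2 z^i z^0, …, x_μ z^i (z^0)^{μ−1}, y_1 z^0, …, y_μ (z^0)^μ)`,
with `x_1 = 1`, `x_μ = y_μ`, `x_A² = y_A² + x_{A+1}²`, maps the unit sphere of
`ℂ^{n+1}` into the unit sphere of `ℂ^{μ(n+1)}`. -/
theorem generalized_whitney_sphere (μ n : ℕ) (hμ : 1 ≤ μ) (x y : ℕ → ℝ)
    (hx1 : x 1 = 1) (hxy : x μ = y μ)
    (hrec : ∀ A, 1 ≤ A → A ≤ μ - 1 → x A ^ 2 = y A ^ 2 + x (A + 1) ^ 2)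
    (z0 : ℂ) (z : Fin n → ℂ) (hz : ‖z0‖ ^ 2 + ∑ i, ‖z i‖ ^ 2 = 1) :
    (∑ A ∈ Finset.Icc 1 μ, x A ^ 2 * ‖z0‖ ^ (2 * (A - 1)) * ∑ i, ‖z i‖ ^ 2)
      + (∑ A ∈ Finset.Icc 1 μ, y A ^ 2 * ‖z0‖ ^ (2 * A)) = 1 := by
  set r : ℝ := ‖z0‖ ^ 2 with hr
  set s : ℝ := ∑ i, ‖z i‖ ^ 2 with hs
  have hsr : s = 1 - r := by linarith
  have hpow : ∀ k : ℕ, ‖z0‖ ^ (2 * k) = r ^ k := by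
    intro k; rw [pow_mul, hr]
  set f : ℕ → ℝ := fun A => if A ≤ μ then x A ^ 2 * r ^ (A - 1) else 0 with hf
  have hterm : ∀ A ∈ Finset.Icc 1 μ,
      x A ^ 2 * ‖z0‖ ^ (2 * (A - 1)) * s + y A ^ 2 * ‖z0‖ ^ (2 * A)
        = f A - f (A + 1) := by
    intro A hA
    obtain ⟨hA1, hA2⟩ := Finset.mem_Icc.mp hA
    rw [hpow, hpow, hsr]
    have hrpow : r ^ A = r ^ (A - 1) * r := by
      conv_lhs => rw [show A = (A - 1) + 1 by omega]
      rw [pow_succ]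
    rcases eq_or_lt_of_le hA2 with heq | hlt
    · subst heq
      simp only [hf, if_pos (le_refl A), if_neg (by omega : ¬ A + 1 ≤ A)]
      rw [hrpow, ← hxy]; ring
    · simp only [hf, if_pos hA2, if_pos (by omega : A + 1 ≤ μ)]
      have := hrec A hA1 (by omega)
      have hA1' : A + 1 - 1 = A := by omega
      rw [hA1', hrpow, this]; ring
  rw [← Finset.sum_add_distrib, Finset.sum_congr rfl hterm,
    show Finset.Icc 1 μ = Finset.Ico 1 (μ + 1) by rw [Finset.Ico_add_one_right_eq_Icc],
    Finset.sum_Ico_eq_sum_range]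
  have := Finset.sum_range_sub' (fun i => f (1 + i)) (μ + 1 - 1)
  simp only [show ∀ i : ℕ, 1 + i + 1 = 1 + (i + 1) from fun i => by omega] at this ⊢
  rw [this]
  simp only [hf, add_zero, if_pos hμ, if_neg (by omega : ¬ 1 + μ ≤ μ)]
  simp [hx1]
end
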